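/- For all positive reals λ, λ', μ, μ', one has (1/B(λ,λ')) ∫₀¹ t^(λ-1)(1-t)^(λ'-1) I(μ,μ';t) dt = [B(λ+μ, λ')/(μ B(λ,λ') B(μ,μ'))] · ₃F₂(1−μ', μ, λ+μ; μ+1, λ+λ'+μ; 1). (Probabilistically, the left side is P(X ≥ Y) for independent X ~ Beta(λ,λ') and Y ~ Beta(μ,μ').) -/

import Mathlib

open MeasureTheory

/-- The beta function `B(a,b) = ∫₀¹ s^(a-1) (1-s)^(b-1) ds`. -/
noncomputable def betaFn (a b : ℝ) : ℝ := ∫ s in (0:ℝ)..1, s ^ (a - 1) * (1 - s) ^ (b - 1)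

/-- The regularized incomplete beta function `I(a,b;t)`. -/
noncomputable def regIncBeta (a b t : ℝ) : ℝ :=
  (betaFn a b)⁻¹ * ∫ s in (0:ℝ)..t, s ^ (a - 1) * (1 - s) ^ (b - 1)

/-- `ℬ(λ,λ',μ,μ',ν,ν') = (1/B(λ,λ')) ∫₀¹ t^(λ-1)(1-t)^(λ'-1) I(μ,μ';t) I(ν,ν';t) dt`. -/
noncomputable def calB (l l' m m' n n' : ℝ) : ℝ :=
  (betaFn l l')⁻¹ * ∫ t in (0:ℝ)..1,
    t ^ (l - 1) * (1 - t) ^ (l' - 1) * regIncBeta m m' t * regIncBeta n n' t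

/-- The Pochhammer symbol (rising factorial) `(a)_k = a(a+1)⋯(a+k-1)`. -/
noncomputable def poch (a : ℝ) (k : ℕ) : ℝ := ∏ i ∈ Finset.range k, (a + i)

/-- The hypergeometric value `₃F₂(a₁,a₂,a₃; b₁,b₂; 1)`. -/
noncomputable def F32 (a1 a2 a3 b1 b2 : ℝ) : ℝ :=
  ∑' k : ℕ, poch a1 k * poch a2 k * poch a3 k / (poch b1 k * poch b2 k * (Nat.factorial k))

/-!
Expand `(1 - s) ^ (m' - 1) = ∑ₖ (1 - m')ₖ sᵏ / k!` by the binomial series and integrate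
termwise, first over `s ∈ [0, t]` and then against `t ^ (l - 1) * (1 - t) ^ (l' - 1)` over
`[0, 1]`. This gives `∑ₖ (1 - m')ₖ / k! / (m + k) * B(l + m + k, l')`, which is the `₃F₂`
series once `B(l + m + k, l') = B(l + m, l') (l + m)ₖ / (l + l' + m)ₖ` and
`m (m + 1)ₖ = (m)ₖ (m + k)`. Instead of estimating the coefficients, both termwise integrations
are justified by monotone convergence: `(1 - m')ₖ` has constant sign once `k ≥ m' - 1`, so a
tail of each series has terms of one sign.
-/

open Filter Set

lemma poch_succ (a : ℝ) (k : ℕ) : poch a (k + 1) = poch a k * (a + k) :=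
  Finset.prod_range_succ _ _

lemma poch_succ' (a : ℝ) (k : ℕ) : poch a (k + 1) = a * poch (a + 1) k := by
  simp only [poch, Finset.prod_range_succ', Nat.cast_add, Nat.cast_one, Nat.cast_zero, add_zero]
  rw [mul_comm]
  congr 1
  refine Finset.prod_congr rfl fun i _ => by ring

lemma poch_add (a : ℝ) (n j : ℕ) : poch a (n + j) = poch a n * poch (a + n) j := by
  simp only [poch, Finset.prod_range_add, Nat.cast_add, add_assoc]

lemma poch_pos {a : ℝ} (ha : 0 < a) (k : ℕ) : 0 < poch a k :=
  Finset.prod_pos fun _ _ => by positivity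

lemma poch_eq_ascPochhammer_eval (a : ℝ) (k : ℕ) : poch a k = (ascPochhammer ℝ k).eval a := by
  induction k with
  | zero => simp [poch]
  | succ k ih => rw [poch_succ, ascPochhammer_succ_eval, ih]

lemma Ring.choose_add_sub_one_eq_poch_div (a : ℝ) (k : ℕ) :
    Ring.choose (a + k - 1) k = poch a k / k.factorial := by
  rw [← Ring.multichoose_eq, eq_div_iff (by positivity), mul_comm, ← nsmul_eq_mul,
    Ring.factorial_nsmul_multichoose_eq_ascPochhammer, Polynomial.ascPochhammer_smeval_eq_eval,
    poch_eq_ascPochhammer_eval]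

lemma hasSum_poch_div_factorial_mul_pow (a : ℝ) {x : ℝ} (hx : |x| < 1) :
    HasSum (fun k => poch a k / k.factorial * x ^ k) ((1 - x) ^ (-a)) := by
  have h := (Real.one_div_one_sub_rpow_hasFPowerSeriesOnBall_zero a).hasSum
    (y := x) (by simpa [edist_dist] using hx)
  simp only [FormalMultilinearSeries.ofScalars_apply_eq, smul_eq_mul,
    Ring.choose_add_sub_one_eq_poch_div, zero_add] at h
  rwa [Real.rpow_neg (by linarith [le_abs_self x]), ← one_div]

lemma eventually_nonneg_or_nonpos_poch (a : ℝ) :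
    (∀ᶠ k in atTop, 0 ≤ poch a k) ∨ (∀ᶠ k in atTop, poch a k ≤ 0) := by
  set K := ⌈-a⌉₊
  have htail : ∀ j, 0 ≤ poch (a + K) j := fun j =>
    Finset.prod_nonneg fun i _ => by linarith [Nat.le_ceil (-a), (i.cast_nonneg : (0:ℝ) ≤ i)]
  have hshift : ∀ k ≥ K, poch a k = poch a K * poch (a + K) (k - K) := fun k hk => by
    rw [← poch_add, Nat.add_sub_cancel' hk]
  rcases le_total 0 (poch a K) with h | h
  · exact .inl (eventually_atTop.2 ⟨K, fun k hk => hshift k hk ▸ mul_nonneg h (htail _)⟩)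
  · exact .inr (eventually_atTop.2
      ⟨K, fun k hk => hshift k hk ▸ mul_nonpos_of_nonpos_of_nonneg h (htail _)⟩)

lemma eventually_nonneg_or_nonpos_div {a b : ℕ → ℝ}
    (ha : (∀ᶠ k in atTop, 0 ≤ a k) ∨ (∀ᶠ k in atTop, a k ≤ 0)) (hb : ∀ k, 0 ≤ b k) :
    (∀ᶠ k in atTop, 0 ≤ a k / b k) ∨ (∀ᶠ k in atTop, a k / b k ≤ 0) :=
  ha.imp (fun h => h.mono fun k hk => div_nonneg hk (hb k))
    (fun h => h.mono fun k hk => div_nonpos_of_nonpos_of_nonneg hk (hb k))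

section

variable {α : Type*} [MeasurableSpace α] {μ : Measure α}

theorem hasSum_integral_of_eventually_nonneg {f : ℕ → α → ℝ} {g : α → ℝ}
    (hf : ∀ k, Integrable (f k) μ) (hg : Integrable g μ) (hf0 : ∀ᶠ k in atTop, 0 ≤ᵐ[μ] f k)
    (hfg : ∀ᵐ x ∂μ, HasSum (fun k => f k x) (g x)) :
    HasSum (fun k => ∫ x, f k x ∂μ) (∫ x, g x ∂μ) := by
  obtain ⟨K, hK⟩ := eventually_atTop.1 hf0
  have hsum_int : Integrable (fun x => ∑ i ∈ Finset.range K, f i x) μ :=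
    integrable_finsetSum _ fun i _ => hf i
  rw [← hasSum_nat_add_iff' K, ← integral_finsetSum _ fun i _ => hf i, ← integral_sub hg hsum_int,
    hasSum_iff_tendsto_nat_of_nonneg fun k => integral_nonneg_of_ae (hK _ (by omega))]
  have hpartial : ∀ n, ∑ k ∈ Finset.range n, ∫ x, f (k + K) x ∂μ
      = ∫ x, ∑ k ∈ Finset.range n, f (k + K) x ∂μ := fun n =>
    (integral_finsetSum _ fun k _ => hf (k + K)).symm
  simp only [hpartial]
  refine integral_tendsto_of_tendsto_of_monotone
    (fun n => integrable_finsetSum _ fun k _ => hf (k + K)) (hg.sub hsum_int) ?_ ?_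
  · filter_upwards [ae_all_iff.2 fun k => hK (k + K) (by omega)] with x hx
    exact monotone_nat_of_le_succ fun n => by
      simpa [Finset.sum_range_succ] using hx n
  · filter_upwards [hfg] with x hx
    exact ((hasSum_nat_add_iff' K).2 hx).tendsto_sum_nat

theorem hasSum_mul_integral_of_eventually_sign {a : ℕ → ℝ} {φ : ℕ → α → ℝ} {g : α → ℝ}
    (ha : (∀ᶠ k in atTop, 0 ≤ a k) ∨ (∀ᶠ k in atTop, a k ≤ 0))
    (hφ : ∀ k, Integrable (φ k) μ) (hφ0 : ∀ k, 0 ≤ᵐ[μ] φ k) (hg : Integrable g μ)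
    (hsum : ∀ᵐ x ∂μ, HasSum (fun k => a k * φ k x) (g x)) :
    HasSum (fun k => a k * ∫ x, φ k x ∂μ) (∫ x, g x ∂μ) := by
  simp_rw [← integral_const_mul]
  rcases ha with ha | ha
  · refine hasSum_integral_of_eventually_nonneg (fun k => (hφ k).const_mul _) hg ?_ hsum
    filter_upwards [ha] with k hk
    filter_upwards [hφ0 k] with x hx using mul_nonneg hk hx
  · have := hasSum_integral_of_eventually_nonneg (f := fun k x => -(a k * φ k x)) (g := -g)
      (fun k => ((hφ k).const_mul _).neg) hg.neg ?_ ?_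
    · simpa [integral_neg] using this.neg
    · filter_upwards [ha] with k hk
      filter_upwards [hφ0 k] with x hx using neg_nonneg.2 (mul_nonpos_of_nonpos_of_nonneg hk hx)
    · filter_upwards [hsum] with x hx using hx.neg

end

lemma cpow_mul_one_sub_cpow_eq_ofReal {a b x : ℝ} (hx : x ∈ Icc (0:ℝ) 1) :
    (x : ℂ) ^ ((a : ℂ) - 1) * (1 - (x : ℂ)) ^ ((b : ℂ) - 1)
      = ((x ^ (a - 1) * (1 - x) ^ (b - 1) : ℝ) : ℂ) := by
  rw [Complex.ofReal_mul, Complex.ofReal_cpow hx.1, Complex.ofReal_cpow (sub_nonneg.2 hx.2)]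
  push_cast
  rfl

lemma Complex.betaIntegral_ofReal (a b : ℝ) : Complex.betaIntegral a b = betaFn a b := by
  rw [Complex.betaIntegral, betaFn, ← intervalIntegral.integral_ofReal]
  refine intervalIntegral.integral_congr fun x hx => ?_
  rw [uIcc_of_le zero_le_one] at hx
  exact cpow_mul_one_sub_cpow_eq_ofReal hx

lemma intervalIntegrable_rpow_mul_one_sub_rpow {a b : ℝ} (ha : 0 < a) (hb : 0 < b) :
    IntervalIntegrable (fun s : ℝ => s ^ (a - 1) * (1 - s) ^ (b - 1)) volume 0 1 := by
  have h := Complex.betaIntegral_convergent (u := a) (v := b) (by simpa) (by simpa)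
  rw [intervalIntegrable_iff_integrableOn_Ioc_of_le zero_le_one] at h ⊢
  refine IntegrableOn.congr_fun h.re (fun x hx => ?_) measurableSet_Ioc
  simp [cpow_mul_one_sub_cpow_eq_ofReal (Ioc_subset_Icc_self hx)]

lemma integrableOn_Icc_rpow_mul_one_sub_rpow {a b : ℝ} (ha : 0 < a) (hb : 0 < b) :
    IntegrableOn (fun s : ℝ => s ^ (a - 1) * (1 - s) ^ (b - 1)) (Icc 0 1) :=
  Iff.mpr integrableOn_Icc_iff_integrableOn_Ioc (intervalIntegrable_rpow_mul_one_sub_rpow ha hb).1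

lemma betaFn_eq_Gamma_mul_Gamma_div {a b : ℝ} (ha : 0 < a) (hb : 0 < b) :
    betaFn a b = Real.Gamma a * Real.Gamma b / Real.Gamma (a + b) := by
  rw [← ProbabilityTheory.beta, ProbabilityTheory.beta_eq_betaIntegralReal a b ha hb,
    Complex.betaIntegral_ofReal, Complex.ofReal_re]

lemma Real.Gamma_add_nat_eq_mul_poch {a : ℝ} (ha : 0 < a) (k : ℕ) :
    Real.Gamma (a + k) = Real.Gamma a * poch a k := by
  induction k with
  | zero => simp [poch]
  | succ k ih =>
    rw [Nat.cast_succ, ← add_assoc, Real.Gamma_add_one (by positivity : a + k ≠ 0), ih, poch_succ]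
    ring

lemma betaFn_add_nat {a b : ℝ} (ha : 0 < a) (hb : 0 < b) (k : ℕ) :
    betaFn (a + k) b = betaFn a b * poch a k / poch (a + b) k := by
  have hab : 0 < a + b := add_pos ha hb
  rw [betaFn_eq_Gamma_mul_Gamma_div (by positivity) hb, betaFn_eq_Gamma_mul_Gamma_div ha hb,
    add_right_comm, Real.Gamma_add_nat_eq_mul_poch ha, Real.Gamma_add_nat_eq_mul_poch hab]
  have := (Real.Gamma_pos_of_pos hab).ne'
  have := (poch_pos hab k).ne'
  field_simp

lemma hasSum_integral_rpow_mul_one_sub_rpow (m' : ℝ) {m t : ℝ} (hm : 0 < m) (ht0 : 0 ≤ t)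
    (ht1 : t < 1) :
    HasSum (fun k : ℕ => poch (1 - m') k / k.factorial * (t ^ (m + k) / (m + k)))
      (∫ s in (0:ℝ)..t, s ^ (m - 1) * (1 - s) ^ (m' - 1)) := by
  have hexp : ∀ k : ℕ, -1 < m - 1 + k := fun k => by linarith [k.cast_nonneg (α := ℝ)]
  have hint : ∀ k : ℕ, ∫ s in (0:ℝ)..t, s ^ (m - 1 + k) = t ^ (m + k) / (m + k) := fun k => by
    rw [integral_rpow (.inl (hexp k)), Real.zero_rpow (by linarith [hexp k]), sub_zero,
      show m - 1 + k + 1 = m + k by ring]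
  simp_rw [← hint, intervalIntegral.integral_of_le ht0]
  refine hasSum_mul_integral_of_eventually_sign
    (eventually_nonneg_or_nonpos_div (eventually_nonneg_or_nonpos_poch _) fun k => by positivity)
    (fun k => (intervalIntegral.intervalIntegrable_rpow' (hexp k)).1)
    (fun k => ae_restrict_of_forall_mem measurableSet_Ioc fun s hs => Real.rpow_nonneg hs.1.le _)
    ?_ (ae_restrict_of_forall_mem measurableSet_Ioc fun s hs => ?_)
  · have h0 : IntegrableOn (fun s : ℝ => s ^ (m - 1)) (Icc 0 t) :=
      Iff.mpr integrableOn_Icc_iff_integrableOn_Ioc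
        (intervalIntegral.intervalIntegrable_rpow' (by linarith)).1
    refine (h0.mul_continuousOn ?_ isCompact_Icc).mono_set Ioc_subset_Icc_self
    exact ContinuousOn.rpow_const (f := fun s : ℝ => 1 - s) (by fun_prop)
      fun s hs => .inl (sub_pos.2 (hs.2.trans_lt ht1)).ne'
  · have h := (hasSum_poch_div_factorial_mul_pow (1 - m') (x := s)
      (abs_lt.2 ⟨by linarith [hs.1], by linarith [hs.2]⟩)).mul_left (s ^ (m - 1))
    have e : ∀ k : ℕ, s ^ (m - 1) * (poch (1 - m') k / k.factorial * s ^ k)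
        = poch (1 - m') k / k.factorial * s ^ (m - 1 + k) := fun k => by
      rw [Real.rpow_add hs.1, Real.rpow_natCast]
      ring
    simpa only [neg_sub, e] using h

lemma hasSum_integral_mul_integral_rpow_mul_one_sub_rpow {l l' m m' : ℝ} (hl : 0 < l)
    (hl' : 0 < l') (hm : 0 < m) (hm' : 0 < m') :
    HasSum (fun k : ℕ => poch (1 - m') k / k.factorial / (m + k) * betaFn (l + m + k) l')
      (∫ t in (0:ℝ)..1, t ^ (l - 1) * (1 - t) ^ (l' - 1) *
        ∫ s in (0:ℝ)..t, s ^ (m - 1) * (1 - s) ^ (m' - 1)) := by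
  have hlmk : ∀ k : ℕ, 0 < l + m + k := fun k => by positivity
  simp_rw [betaFn, intervalIntegral.integral_of_le zero_le_one, integral_Ioc_eq_integral_Ioo]
  refine hasSum_mul_integral_of_eventually_sign (eventually_nonneg_or_nonpos_div
      (eventually_nonneg_or_nonpos_div (eventually_nonneg_or_nonpos_poch _) fun k => by positivity)
      fun k => by positivity)
    (fun k => (intervalIntegrable_rpow_mul_one_sub_rpow (hlmk k) hl').1.mono_set
      Ioo_subset_Ioc_self)
    (fun k => ae_restrict_of_forall_mem measurableSet_Ioo fun t ht =>
      mul_nonneg (Real.rpow_nonneg ht.1.le _) (Real.rpow_nonneg (by linarith [ht.2]) _))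
    ?_ (ae_restrict_of_forall_mem measurableSet_Ioo fun t ht => ?_)
  · have hG : ContinuousOn (fun t => ∫ s in (0:ℝ)..t, s ^ (m - 1) * (1 - s) ^ (m' - 1))
        (Icc 0 1) := by
      have h := integrableOn_Icc_rpow_mul_one_sub_rpow hm hm'
      rw [← uIcc_of_le zero_le_one] at h ⊢
      exact intervalIntegral.continuousOn_primitive_interval h
    exact ((integrableOn_Icc_rpow_mul_one_sub_rpow hl hl').mul_continuousOn hG
      isCompact_Icc).mono_set Ioo_subset_Icc_self
  · have h := (hasSum_integral_rpow_mul_one_sub_rpow m' hm ht.1.le ht.2).mul_left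
      (t ^ (l - 1) * (1 - t) ^ (l' - 1))
    have e : ∀ k : ℕ, t ^ (l - 1) * (1 - t) ^ (l' - 1) *
          (poch (1 - m') k / k.factorial * (t ^ (m + k) / (m + k)))
        = poch (1 - m') k / k.factorial / (m + k) * (t ^ (l + m + k - 1) * (1 - t) ^ (l' - 1)) :=
      fun k => by
        rw [show l + m + k - 1 = (l - 1) + (m + k) by ring, Real.rpow_add ht.1 (l - 1)]
        ring
    simpa only [e] using h

lemma poch_div_factorial_div_add_mul_betaFn (c : ℝ) {l l' m : ℝ} (hl : 0 < l) (hl' : 0 < l')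
    (hm : 0 < m) (k : ℕ) :
    poch c k / k.factorial / (m + k) * betaFn (l + m + k) l'
      = betaFn (l + m) l' / m * (poch c k * poch m k * poch (l + m) k /
          (poch (m + 1) k * poch (l + l' + m) k * k.factorial)) := by
  have hm1 : m * poch (m + 1) k = poch m k * (m + k) := by rw [← poch_succ', poch_succ]
  rw [betaFn_add_nat (add_pos hl hm) hl', show l + m + l' = l + l' + m by ring]
  have := hm.ne'
  have := (show (0:ℝ) < m + k by positivity).ne'
  have := (poch_pos (show 0 < m + 1 by positivity) k).ne'
  have := (poch_pos (show 0 < l + l' + m by positivity) k).ne'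
  field_simp
  linear_combination (poch c k * betaFn (l + m) l' * poch (l + m) k) * hm1

/-- `P(X ≥ Y)` for independent `X ~ Beta(λ,λ')`, `Y ~ Beta(μ,μ')` in
closed hypergeometric form. -/
theorem stmt8 (l l' m m' : ℝ) (hl : 0 < l) (hl' : 0 < l') (hm : 0 < m)
    (hm' : 0 < m') :
    (betaFn l l')⁻¹ *
        ∫ t in (0:ℝ)..1, t ^ (l - 1) * (1 - t) ^ (l' - 1) * regIncBeta m m' t =
      betaFn (l + m) l' / (m * betaFn l l' * betaFn m m') *
        F32 (1 - m') m (l + m) (m + 1) (l + l' + m) := by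
  have hsum := hasSum_integral_mul_integral_rpow_mul_one_sub_rpow hl hl' hm hm'
  simp_rw [poch_div_factorial_div_add_mul_betaFn (1 - m') hl hl' hm] at hsum
  simp_rw [regIncBeta, mul_left_comm _ (betaFn m m')⁻¹, intervalIntegral.integral_const_mul,
    ← hsum.tsum_eq, tsum_mul_left, F32]
  ring
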